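/- Let H ⋊_β F be a semidirect product of groups where H carries a skew left brace structure (H,+,∘) such that β_f is an automorphism of the skew left brace (H,+,∘) for every f ∈ F. Then the operation (h₁,f₁) ⊕ (h₂,f₂) := (h₁+h₂, f₂) together with the semidirect product group operation makes H×F a left cancellative left semi-brace in which H×{0} equals Ker(λ|_E) and {0}×F is the set of additive idempotents. -/
import Mathlib


/-- A left cancellative left semi-brace: `(B,+)` is a left cancellative semigroup,
`(B,*)` is a group (the paper's `∘`, with neutral element `1`, the paper's `0`),
and `a * (b + c) = a * b + a * (a⁻¹ + c)`. -/
class LeftSemiBrace (B : Type*) extends Add B, Group B where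
  add_assoc' : ∀ a b c : B, a + b + c = a + (b + c)
  add_left_cancel' : ∀ a b c : B, a + b = a + c → b = c
  compat : ∀ a b c : B, a * (b + c) = a * b + a * (a⁻¹ + c)

/-- A skew left brace: `(H,+)` and `(H,*)` are groups and
`a * (b + c) = a * b + -a + a * c`. -/
class SkewLeftBrace (H : Type*) extends AddGroup H, Group H where
  compat : ∀ a b c : H, a * (b + c) = a * b + -a + a * c

variable {H F : Type*} [SkewLeftBrace H] [Group F]

/-- Addition `(h₁,f₁) ⊕ (h₂,f₂) = (h₁+h₂, f₂)` on `H × F`. -/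
def sbAdd (x y : H × F) : H × F := (x.1 + y.1, y.2)

/-- The semidirect product group multiplication on `H × F` via `β`. -/
def sbMul (β : F → H → H) (x y : H × F) : H × F := (x.1 * β x.2 y.1, x.2 * y.2)

/-- The multiplicative inverse in the semidirect product group `H ⋊ F`. -/
def sbInv (β : F → H → H) (x : H × F) : H × F := (β x.2⁻¹ x.1⁻¹, x.2⁻¹)

/-- The lambda map `λ_a(b) = a ∘ (a⁻ + b)` of the resulting semi-brace. -/
def sbLam (β : F → H → H) (a b : H × F) : H × F := sbMul β a (sbAdd (sbInv β a) b)

lemma slb_zero_eq_one : (0 : H) = 1 := by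
  have h := SkewLeftBrace.compat (1 : H) 0 0
  simp only [one_mul, add_zero, zero_add] at h
  -- h : 0 = -1
  have h2 := congrArg Neg.neg h
  simpa using h2

lemma slb_key (a c : H) : a * (a⁻¹ + c) = -a + a * c := by
  have h := SkewLeftBrace.compat a a⁻¹ c
  rw [mul_inv_cancel, ← slb_zero_eq_one, zero_add] at h
  exact h

theorem stmt11 (β : F → H → H)
    (hone : β 1 = id)
    (hcomp : ∀ f₁ f₂ : F, β (f₁ * f₂) = β f₁ ∘ β f₂)
    (hadd : ∀ (f : F) (x y : H), β f (x + y) = β f x + β f y)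
    (hmul : ∀ (f : F) (x y : H), β f (x * y) = β f x * β f y) :
    (∀ x y z : H × F, sbAdd (sbAdd x y) z = sbAdd x (sbAdd y z)) ∧
    (∀ x y z : H × F, sbAdd x y = sbAdd x z → y = z) ∧
    (∀ x y z : H × F, sbMul β (sbMul β x y) z = sbMul β x (sbMul β y z)) ∧
    (∀ x : H × F, sbMul β (1, 1) x = x) ∧
    (∀ x : H × F, sbMul β x (1, 1) = x) ∧
    (∀ x : H × F, sbMul β (sbInv β x) x = (1, 1)) ∧
    (∀ x y z : H × F,
      sbMul β x (sbAdd y z) = sbAdd (sbMul β x y) (sbMul β x (sbAdd (sbInv β x) z))) ∧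
    ({p : H × F | sbAdd p p = p} = {p : H × F | p.1 = 1}) ∧
    ({b : H × F | ∀ e : H × F, sbAdd e e = e → sbLam β b e = e} = {p : H × F | p.2 = 1}) := by
  have hb1 : ∀ f : F, β f 1 = 1 := by
    intro f
    have h := hmul f 1 1
    rw [mul_one] at h
    have h2 : β f 1 * β f 1 = β f 1 * 1 := by rw [mul_one]; exact h.symm
    exact mul_left_cancel h2
  have hbinv : ∀ (f : F) (x : H), β f (β f⁻¹ x) = x := by
    intro f x
    have h : β f ∘ β f⁻¹ = id := by
      rw [← hcomp, mul_inv_cancel, hone]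
    exact congrFun h x
  have hadd1 : ∀ a : H, a + 1 = a := by
    intro a; rw [← slb_zero_eq_one, add_zero]
  refine ⟨?_, ?_, ?_, ?_, ?_, ?_, ?_, ?_, ?_⟩
  · intro x y z; simp [sbAdd, add_assoc]
  · intro x y z h
    have h' : (x.1 + y.1, y.2) = (x.1 + z.1, z.2) := h
    rw [Prod.mk.injEq] at h'
    exact Prod.ext (add_left_cancel h'.1) h'.2
  · intro x y z
    simp [sbMul, hcomp, mul_assoc, hmul]
  · intro x; simp [sbMul, hone]
  · intro x; simp [sbMul, hb1]
  · intro x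
    simp [sbMul, sbInv, ← hmul, hb1]
  · intro x y z
    have key : x.1 * (β x.2 y.1 + β x.2 z.1)
        = x.1 * β x.2 y.1 + x.1 * (x.1⁻¹ + β x.2 z.1) := by
      rw [slb_key, SkewLeftBrace.compat, add_assoc]
    simp only [sbMul, sbAdd, sbInv, hadd, hbinv]
    exact Prod.ext key rfl
  · ext p
    simp only [Set.mem_setOf_eq, sbAdd, Prod.ext_iff, and_true]
    constructor
    · intro h
      have h1 : p.1 + p.1 = p.1 + 0 := by rw [add_zero]; exact h
      exact (add_left_cancel h1).trans slb_zero_eq_one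
    · intro h
      rw [h, hadd1]
  · have lam : ∀ b e : H × F, e.1 = 1 → sbLam β b e = (1, b.2 * e.2) := by
      intro b e he
      simp only [sbLam, sbMul, sbAdd, sbInv, he]
      rw [hadd, hbinv, hb1, hadd1, mul_inv_cancel]
    ext b
    simp only [Set.mem_setOf_eq]
    constructor
    · intro h
      have hidem : sbAdd ((1 : H), (1 : F)) (1, 1) = (1, 1) := by
        simp only [sbAdd]
        exact Prod.ext (hadd1 1) rfl
      have h2 := h (1, 1) hidem
      rw [lam b (1, 1) rfl] at h2
      simpa using congrArg Prod.snd h2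
    · intro hb e he
      have he1 : e.1 = 1 := by
        have h1 : e.1 + e.1 = e.1 + 0 := by
          rw [add_zero]; exact congrArg Prod.fst he
        rw [add_left_cancel h1]; exact slb_zero_eq_one
      rw [lam b e he1, hb, one_mul, ← he1]
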